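/- Let G and F be finite simple graphs sharing exactly one vertex u (all other vertices and all edges of G and F are disjoint), and suppose F contains a vertex w with w ∉ N_F[u], i.e. w ≠ u and w is not adjacent to u in F. Let H be the union of G and F (the graph obtained by fusing F to G at u). If H has a dominating set of size s, then G has a set of size at most s − 1 that dominates every vertex of G except possibly u. -/
import Mathlib


/-- `S` is a dominating set of the finite simple graph `H`. -/
def DomSet {V : Type*} (H : SimpleGraph V) (S : Finset V) : Prop :=
  ∀ v : V, v ∈ S ∨ ∃ w ∈ S, H.Adj w v

/-- Second bullet of Lemma 10: `H` is the union of two graphs `G = H[A]` and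
`F = H[B]` sharing exactly the vertex `u` (no edge between `A ∖ {u}` and `B ∖ {u}`),
and `F` contains a vertex `w` outside the closed neighborhood `N_F[u]` of `u` in `F`.
Then from any dominating set `S` of `H` one obtains a set `T ⊆ A` of size at most
`|S| − 1` dominating every vertex of `G` except possibly `u`. -/
theorem stmt11 {V : Type*} [Fintype V] [DecidableEq V] (H : SimpleGraph V)
    (A B : Finset V) (u : V)
    (hcover : A ∪ B = Finset.univ) (hinter : A ∩ B = {u})
    (hsep : ∀ a ∈ A, ∀ b ∈ B, a ≠ u → b ≠ u → ¬ H.Adj a b)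
    (w : V) (hw : w ∈ B) (hwu : w ≠ u) (hwadj : ¬ H.Adj u w) :
    ∀ S : Finset V, DomSet H S →
      ∃ T : Finset V, T ⊆ A ∧ T.card + 1 ≤ S.card ∧
        ∀ x ∈ A, x ≠ u → (x ∈ T ∨ ∃ y ∈ T, H.Adj y x) := by
  intro S hS
  -- find z ∈ S with z ∈ B, z ≠ u (dominating w)
  obtain ⟨z, hzS, hzB, hzu⟩ : ∃ z ∈ S, z ∈ B ∧ z ≠ u := by
    rcases hS w with hwS | ⟨y, hyS, hyw⟩
    · exact ⟨w, hwS, hw, hwu⟩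
    · have hyu : y ≠ u := by rintro rfl; exact hwadj hyw
      have hyB : y ∈ B := by
        by_contra hyB
        have hyA : y ∈ A := by
          have := Finset.mem_univ y
          rw [← hcover, Finset.mem_union] at this
          tauto
        exact hsep y hyA w hw hyu hwu hyw
      exact ⟨y, hyS, hyB, hyu⟩
  have hzA : z ∉ A := by
    intro hzA
    have : z ∈ A ∩ B := Finset.mem_inter.mpr ⟨hzA, hzB⟩
    rw [hinter, Finset.mem_singleton] at this
    exact hzu this
  refine ⟨S ∩ A, Finset.inter_subset_right, ?_, ?_⟩
  · have hins : insert z (S ∩ A) ⊆ S := by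
      intro x hx
      rcases Finset.mem_insert.mp hx with rfl | hx
      · exact hzS
      · exact (Finset.mem_inter.mp hx).1
    calc (S ∩ A).card + 1 = (insert z (S ∩ A)).card := by
          rw [Finset.card_insert_of_notMem (fun h => hzA (Finset.mem_inter.mp h).2)]
      _ ≤ S.card := Finset.card_le_card hins
  · intro x hxA hxu
    rcases hS x with hxS | ⟨y, hyS, hyx⟩
    · exact Or.inl (Finset.mem_inter.mpr ⟨hxS, hxA⟩)
    · have hyA : y ∈ A := by
        by_contra hyA
        have hyB : y ∈ B := by
          have := Finset.mem_univ y
          rw [← hcover, Finset.mem_union] at this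
          tauto
        have huAB : u ∈ A ∩ B := hinter ▸ Finset.mem_singleton_self u
        have hyu : y ≠ u := by
          rintro rfl
          exact hyA (Finset.mem_inter.mp huAB).1
        exact hsep x hxA y hyB hxu hyu hyx.symm
      exact Or.inr ⟨y, Finset.mem_inter.mpr ⟨hyS, hyA⟩, hyx⟩
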